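/- Let f : ℝ → ℝ be infinitely differentiable, x ∈ ℝ with f′(x) ≠ 0, and let d₀ = 1/10, d₁ = 6/10, d₂ = 3/10. Define, for small h > 0, the WENO-UD5 unnormalized weights with exponent p = 1 and ε = 0: αₖ(h) = dₖ(1 + ζ(h)/βₖ(h)) (with the WENO-LOC smoothness indicators βₖ(h), which are nonzero for all sufficiently small h, and the global smoothness indicator ζ(h)), and the normalized weights ωₖ(h) = αₖ(h)/(α₀(h)+α₁(h)+α₂(h)). Then for each k ∈ {0,1,2}, ωₖ(h) − dₖ = O(h⁵) as h → 0⁺. -/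

import Mathlib

set_option maxHeartbeats 2000000

open Filter Asymptotics Topology

/-- The WENO-LOC smoothness indicators of `f` at center `x` with mesh size `h`. -/
noncomputable def betaLOC (f : ℝ → ℝ) (x h : ℝ) : Fin 3 → ℝ :=
  ![(1/2) * ((f (x - h) - f (x - 2*h))^2 + (f x - f (x - h))^2)
      + (f x - 2 * f (x - h) + f (x - 2*h))^2,
    (1/2) * ((f x - f (x - h))^2 + (f (x + h) - f x)^2)
      + (f (x - h) - 2 * f x + f (x + h))^2,
    (1/2) * ((f (x + h) - f x)^2 + (f (x + 2*h) - f (x + h))^2)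
      + (f x - 2 * f (x + h) + f (x + 2*h))^2]

/-- The global smoothness indicator `ζ` of `f` at center `x` with mesh size `h`. -/
noncomputable def zetaUD (f : ℝ → ℝ) (x h : ℝ) : ℝ :=
  |(f (x - 2*h) - 2 * f (x - h) + f x)^2
    - 2 * (f (x - h) - 2 * f x + f (x + h))^2
    + (f x - 2 * f (x + h) + f (x + 2*h))^2|

/-- The linear (ideal) weights `d₀ = 1/10`, `d₁ = 6/10`, `d₂ = 3/10`. -/
noncomputable def dlin : Fin 3 → ℝ := ![1/10, 6/10, 3/10]

private lemma iterDW (g : ℝ → ℝ) (hg : ContDiff ℝ (⊤ : ℕ∞) g) (k : ℕ) :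
    iteratedDerivWithin k g (Set.Icc (0:ℝ) 1) 0 = iteratedDeriv k g 0 := by
  have H : HasFTaylorSeriesUpToOn (k : ℕ∞) g (ftaylorSeries ℝ g) (Set.Icc (0:ℝ) 1) := by
    rw [← ftaylorSeriesWithin_univ]
    exact ((hg.of_le (by exact_mod_cast le_top)).contDiffOn.ftaylorSeriesWithin uniqueDiffOn_univ).mono
      (Set.subset_univ _)
  have h2 := H.eq_iteratedFDerivWithin_of_uniqueDiffOn le_rfl (uniqueDiffOn_Icc one_pos)
    (Set.left_mem_Icc.mpr zero_le_one)
  rw [iteratedDerivWithin_eq_iteratedFDerivWithin, iteratedDeriv_eq_iteratedFDeriv, ← h2]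
  rfl

private lemma taylor_right (g : ℝ → ℝ) (hg : ContDiff ℝ (⊤ : ℕ∞) g) :
    ∃ C : ℝ, ∀ t ∈ Set.Icc (0:ℝ) 1,
      |g t - ∑ i ∈ Finset.range 5, iteratedDeriv i g 0 / (Nat.factorial i : ℝ) * t ^ i| ≤ C * t ^ 5 := by
  obtain ⟨C, hC⟩ := exists_taylor_mean_remainder_bound (a := 0) (b := 1) (n := 4)
    zero_le_one (hg.of_le (by exact WithTop.coe_le_coe.mpr le_top)).contDiffOn
  refine ⟨C, fun t ht => ?_⟩
  have h1 := hC t ht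
  rw [taylor_within_apply] at h1
  simp only [iterDW g hg, sub_zero, smul_eq_mul, Real.norm_eq_abs] at h1
  have e1 : ∑ i ∈ Finset.range 5, iteratedDeriv i g 0 / (Nat.factorial i : ℝ) * t ^ i
      = ∑ k ∈ Finset.range (4+1), (Nat.factorial k : ℝ)⁻¹ * t ^ k * iteratedDeriv k g 0 := by
    apply Finset.sum_congr rfl
    intro i _
    ring
  rw [e1]
  exact h1

private lemma taylor5 (g : ℝ → ℝ) (hg : ContDiff ℝ (⊤ : ℕ∞) g) :
    (fun t : ℝ => g t - ∑ i ∈ Finset.range 5,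
        iteratedDeriv i g 0 / (Nat.factorial i : ℝ) * t ^ i)
      =O[𝓝 (0:ℝ)] fun t => t ^ 5 := by
  obtain ⟨C, hC⟩ := taylor_right g hg
  obtain ⟨C', hC'⟩ := taylor_right (fun t => g (-t)) (hg.comp contDiff_neg)
  rw [isBigO_iff]
  refine ⟨|C| + |C'|, ?_⟩
  have hev : ∀ᶠ t in 𝓝 (0:ℝ), t ∈ Set.Icc (-1:ℝ) 1 :=
    Icc_mem_nhds (by norm_num) (by norm_num)
  filter_upwards [hev] with t ht
  rw [Real.norm_eq_abs, Real.norm_eq_abs]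
  rcases le_or_gt 0 t with h0 | h0
  · have h1 := hC t ⟨h0, ht.2⟩
    have h2 : |t ^ 5| = t ^ 5 := abs_of_nonneg (by positivity)
    rw [h2]
    refine h1.trans ?_
    have : (0:ℝ) ≤ t ^ 5 := by positivity
    nlinarith [le_abs_self C, abs_nonneg C', this]
  · have h1 := hC' (-t) ⟨by linarith, by linarith [ht.1]⟩
    simp only [neg_neg, iteratedDeriv_comp_neg, neg_zero, smul_eq_mul] at h1
    have e1 : ∑ i ∈ Finset.range 5,
        (-1:ℝ) ^ i * iteratedDeriv i g 0 / (Nat.factorial i : ℝ) * (-t) ^ i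
        = ∑ i ∈ Finset.range 5, iteratedDeriv i g 0 / (Nat.factorial i : ℝ) * t ^ i := by
      apply Finset.sum_congr rfl
      intro i _
      have : (-1:ℝ) ^ i * (-t) ^ i = t ^ i := by
        rw [← mul_pow, neg_one_mul, neg_neg]
      calc (-1:ℝ) ^ i * iteratedDeriv i g 0 / (Nat.factorial i : ℝ) * (-t) ^ i
          = iteratedDeriv i g 0 / (Nat.factorial i : ℝ) * ((-1:ℝ) ^ i * (-t) ^ i) := by ring
        _ = _ := by rw [this]
    rw [e1] at h1
    have h2 : |t ^ 5| = (-t) ^ 5 := by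
      rw [abs_pow, abs_of_neg h0]
    rw [h2]
    refine h1.trans ?_
    have : (0:ℝ) ≤ (-t) ^ 5 := pow_nonneg (by linarith) 5
    nlinarith [le_abs_self C', abs_nonneg C, this]

private lemma pow_bigO_pow {m n : ℕ} (hmn : n ≤ m) :
    (fun h : ℝ => h ^ m) =O[𝓝[>] (0:ℝ)] fun h => h ^ n := by
  rw [isBigO_iff]
  refine ⟨1, ?_⟩
  have h1 : ∀ᶠ h : ℝ in 𝓝[>] (0:ℝ), h ∈ Set.Ioo (0:ℝ) 1 :=
    Ioo_mem_nhdsGT_of_mem (by norm_num : (0:ℝ) ∈ Set.Ico (0:ℝ) 1)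
  filter_upwards [h1] with h hh
  rw [Real.norm_eq_abs, Real.norm_eq_abs, abs_of_nonneg (pow_nonneg hh.1.le _),
    abs_of_nonneg (pow_nonneg hh.1.le _), one_mul]
  exact pow_le_pow_of_le_one hh.1.le hh.2.le hmn

private lemma mul_bigO_pow {l : Filter ℝ} {f g : ℝ → ℝ} {a b : ℕ}
    (hf : f =O[l] fun h => h ^ a) (hg : g =O[l] fun h => h ^ b) :
    (fun h => f h * g h) =O[l] fun h => h ^ (a + b) :=
  (hf.mul hg).congr_right fun h => (pow_add h a b).symm

private lemma const_mul_pow_bigO {n : ℕ} (c : ℝ) :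
    (fun h : ℝ => c * h ^ n) =O[𝓝[>] (0:ℝ)] fun h => h ^ n :=
  (isBigO_refl _ _).const_mul_left c

private lemma final_ineq (r0 r1 r2 M : ℝ) (h0 : 0 ≤ r0) (h1 : 0 ≤ r1) (h2 : 0 ≤ r2)
    (h01 : |r0 - r1| ≤ M) (h02 : |r0 - r2| ≤ M) (h12 : |r1 - r2| ≤ M) :
    |1/10 * (1 + r0) / (1/10 * (1 + r0) + 6/10 * (1 + r1) + 3/10 * (1 + r2)) - 1/10| ≤ M ∧
    |6/10 * (1 + r1) / (1/10 * (1 + r0) + 6/10 * (1 + r1) + 3/10 * (1 + r2)) - 6/10| ≤ M ∧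
    |3/10 * (1 + r2) / (1/10 * (1 + r0) + 6/10 * (1 + r1) + 3/10 * (1 + r2)) - 3/10| ≤ M := by
  have hM : 0 ≤ M := le_trans (abs_nonneg _) h01
  set S : ℝ := 1/10 * (1 + r0) + 6/10 * (1 + r1) + 3/10 * (1 + r2) with hSdef
  have hS1 : 1 ≤ S := by simp only [hSdef]; linarith
  have hS0 : 0 < S := by linarith
  have key : ∀ N c : ℝ, |N| ≤ c * M → 0 ≤ c → c ≤ 100 →
      |N / (100 * S)| ≤ M := by
    intro N c hN hc hc100
    rw [abs_div]
    have hd : |100 * S| = 100 * S := abs_of_pos (by linarith)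
    rw [hd, div_le_iff₀ (by linarith)]
    calc |N| ≤ c * M := hN
      _ ≤ 100 * M := by nlinarith
      _ ≤ M * (100 * S) := by nlinarith
  refine ⟨?_, ?_, ?_⟩
  · have e : 1/10 * (1 + r0) / S - 1/10 = (6*(r0 - r1) + 3*(r0 - r2)) / (100 * S) := by
      field_simp
      ring
    rw [e]
    refine key _ 9 ?_ (by norm_num) (by norm_num)
    calc |6*(r0 - r1) + 3*(r0 - r2)| ≤ |6*(r0-r1)| + |3*(r0-r2)| := abs_add_le _ _
      _ = 6*|r0-r1| + 3*|r0-r2| := by rw [abs_mul, abs_mul]; norm_num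
      _ ≤ 9 * M := by linarith
  · have e : 6/10 * (1 + r1) / S - 6/10 = (6*(r1 - r0) + 18*(r1 - r2)) / (100 * S) := by
      field_simp
      ring
    rw [e]
    refine key _ 24 ?_ (by norm_num) (by norm_num)
    calc |6*(r1 - r0) + 18*(r1 - r2)| ≤ |6*(r1-r0)| + |18*(r1-r2)| := abs_add_le _ _
      _ = 6*|r1-r0| + 18*|r1-r2| := by rw [abs_mul, abs_mul]; norm_num
      _ ≤ 24 * M := by rw [abs_sub_comm r1 r0]; linarith
  · have e : 3/10 * (1 + r2) / S - 3/10 = (3*(r2 - r0) + 18*(r2 - r1)) / (100 * S) := by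
      field_simp
      ring
    rw [e]
    refine key _ 21 ?_ (by norm_num) (by norm_num)
    calc |3*(r2 - r0) + 18*(r2 - r1)| ≤ |3*(r2-r0)| + |18*(r2-r1)| := abs_add_le _ _
      _ = 3*|r2-r0| + 18*|r2-r1| := by rw [abs_mul, abs_mul]; norm_num
      _ ≤ 21 * M := by rw [abs_sub_comm r2 r0, abs_sub_comm r2 r1]; linarith

private lemma poly_tail (a b c : ℝ) :
    (fun h : ℝ => a * h^2 + b * h^3 + c * h^4) =O[𝓝[>] (0:ℝ)] fun h => h^2 :=
  ((const_mul_pow_bigO a).add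
    ((const_mul_pow_bigO b).trans (pow_bigO_pow (by norm_num)))).add
    ((const_mul_pow_bigO c).trans (pow_bigO_pow (by norm_num)))

private lemma lin_bigO (a : ℝ) :
    (fun h : ℝ => a * h) =O[𝓝[>] (0:ℝ)] fun h => h^1 :=
  (const_mul_pow_bigO (n := 1) a).congr_left fun h => by rw [pow_one]

/-- In smooth monotone regions (`f′(x) ≠ 0`), the WENO-UD5 nonlinear weights with
exponent `p = 1` and `ε = 0` converge to the linear weights with fifth order of
accuracy as `h → 0⁺`. -/
theorem wenoUD5_weights_p1_smooth_fifth_order (f : ℝ → ℝ) (hf : ContDiff ℝ (⊤ : ℕ∞) f)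
    (x : ℝ) (hx : deriv f x ≠ 0)
    (hβ : ∀ k : Fin 3, ∀ᶠ h in 𝓝[>] (0:ℝ), betaLOC f x h k ≠ 0) :
    ∀ k : Fin 3,
      (fun h : ℝ =>
          (dlin k * (1 + zetaUD f x h / betaLOC f x h k))
            / (∑ l : Fin 3, dlin l * (1 + zetaUD f x h / betaLOC f x h l)) - dlin k)
        =O[𝓝[>] (0:ℝ)] fun h => h ^ 5 := by
  have hmain : ∃ c1 c2 c3 c4 : ℝ, c1 = deriv f x ∧ ∀ j : ℝ,
      (fun h : ℝ => f (x + j*h) -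
        (f x + c1*(j*h) + c2*(j*h)^2 + c3*(j*h)^3 + c4*(j*h)^4)) =O[𝓝[>] (0:ℝ)]
        fun h => h^5 := by
    refine ⟨iteratedDeriv 1 f x / (Nat.factorial 1 : ℝ),
      iteratedDeriv 2 f x / (Nat.factorial 2 : ℝ),
      iteratedDeriv 3 f x / (Nat.factorial 3 : ℝ),
      iteratedDeriv 4 f x / (Nat.factorial 4 : ℝ),
      by simp [iteratedDeriv_one, Nat.factorial], ?_⟩
    intro j
    have hg : ContDiff ℝ (⊤ : ℕ∞) (fun t => f (x + t)) := hf.comp (contDiff_const.add contDiff_id)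
    have h1 := taylor5 _ hg
    have h2 : Tendsto (fun h : ℝ => j * h) (𝓝[>] (0:ℝ)) (𝓝 0) := by
      have h3 : Tendsto (fun h : ℝ => j * h) (𝓝 (0:ℝ)) (𝓝 (j * 0)) :=
        (continuous_const.mul continuous_id).tendsto 0
      rw [mul_zero] at h3
      exact h3.mono_left nhdsWithin_le_nhds
    have h3 := h1.comp_tendsto h2
    have h4 : (fun h : ℝ => (j*h)^5) =O[𝓝[>] (0:ℝ)] fun h => h^5 := by
      have h5 := (isBigO_refl (fun h : ℝ => h^5) (𝓝[>] (0:ℝ))).const_mul_left (j^5)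
      exact h5.congr_left fun h => by rw [← mul_pow]
    refine (h3.trans h4).congr_left fun h => ?_
    simp only [Function.comp_apply, iteratedDeriv_comp_const_add, add_zero,
      Finset.sum_range_succ, Finset.sum_range_zero, iteratedDeriv_zero]
    norm_num [Nat.factorial]
  obtain ⟨c1, c2, c3, c4, hc1, htay⟩ := hmain
  -- specialized Taylor expansions
  have em2 : (fun h : ℝ => f (x - 2*h) -
      (f x - 2*c1*h + 4*c2*h^2 - 8*c3*h^3 + 16*c4*h^4)) =O[𝓝[>] (0:ℝ)] fun h => h^5 := by
    have h1 := htay (-2)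
    have harg : ∀ h : ℝ, x + (-2)*h = x - 2*h := fun h => by ring
    simp only [harg] at h1
    exact h1.congr_left fun h => by ring
  have em1 : (fun h : ℝ => f (x - h) -
      (f x - c1*h + c2*h^2 - c3*h^3 + c4*h^4)) =O[𝓝[>] (0:ℝ)] fun h => h^5 := by
    have h1 := htay (-1)
    have harg : ∀ h : ℝ, x + (-1)*h = x - h := fun h => by ring
    simp only [harg] at h1
    exact h1.congr_left fun h => by ring
  have e1 : (fun h : ℝ => f (x + h) -
      (f x + c1*h + c2*h^2 + c3*h^3 + c4*h^4)) =O[𝓝[>] (0:ℝ)] fun h => h^5 := by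
    have h1 := htay 1
    have harg : ∀ h : ℝ, x + 1*h = x + h := fun h => by ring
    simp only [harg] at h1
    exact h1.congr_left fun h => by ring
  have e2 : (fun h : ℝ => f (x + 2*h) -
      (f x + 2*c1*h + 4*c2*h^2 + 8*c3*h^3 + 16*c4*h^4)) =O[𝓝[>] (0:ℝ)] fun h => h^5 := by
    exact (htay 2).congr_left fun h => by ring
  -- second differences
  have hA : (fun h : ℝ => (f (x - 2*h) - 2*f (x - h) + f x)
      - (2*c2*h^2 + -6*c3*h^3 + 14*c4*h^4)) =O[𝓝[>] (0:ℝ)] fun h => h^5 :=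
    (em2.sub (em1.const_mul_left 2)).congr_left fun h => by ring
  have hB : (fun h : ℝ => (f (x - h) - 2*f x + f (x + h))
      - (2*c2*h^2 + 0*h^3 + 2*c4*h^4)) =O[𝓝[>] (0:ℝ)] fun h => h^5 := by
    have := (em1.add e1).sub ((isBigO_refl (fun _ : ℝ => (0:ℝ)) _).trans (isBigO_zero _ _))
    exact ((em1.add e1).congr_left fun h => by ring)
  have hC : (fun h : ℝ => (f x - 2*f (x + h) + f (x + 2*h))
      - (2*c2*h^2 + 6*c3*h^3 + 14*c4*h^4)) =O[𝓝[>] (0:ℝ)] fun h => h^5 :=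
    (e2.sub (e1.const_mul_left 2)).congr_left fun h => by ring
  have hA2 : (fun h : ℝ => f (x - 2*h) - 2*f (x - h) + f x) =O[𝓝[>] (0:ℝ)] fun h => h^2 :=
    ((hA.trans (pow_bigO_pow (by norm_num))).add
      (poly_tail (2*c2) (-6*c3) (14*c4))).congr_left fun h => by ring
  have hB2 : (fun h : ℝ => f (x - h) - 2*f x + f (x + h)) =O[𝓝[>] (0:ℝ)] fun h => h^2 :=
    ((hB.trans (pow_bigO_pow (by norm_num))).add
      (poly_tail (2*c2) 0 (2*c4))).congr_left fun h => by ring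
  have hC2 : (fun h : ℝ => f x - 2*f (x + h) + f (x + 2*h)) =O[𝓝[>] (0:ℝ)] fun h => h^2 :=
    ((hC.trans (pow_bigO_pow (by norm_num))).add
      (poly_tail (2*c2) (6*c3) (14*c4))).congr_left fun h => by ring
  -- first differences minus c1*h
  have hr2m : (fun h : ℝ => (f (x - h) - f (x - 2*h)) - c1*h) =O[𝓝[>] (0:ℝ)] fun h => h^2 :=
    (((em1.sub em2).trans (pow_bigO_pow (by norm_num))).add
      (poly_tail (-3*c2) (7*c3) (-15*c4))).congr_left fun h => by ring
  have hr1m : (fun h : ℝ => (f x - f (x - h)) - c1*h) =O[𝓝[>] (0:ℝ)] fun h => h^2 :=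
    ((em1.neg_left.trans (pow_bigO_pow (by norm_num))).add
      (poly_tail (-c2) c3 (-c4))).congr_left fun h => by ring
  have hr1 : (fun h : ℝ => (f (x + h) - f x) - c1*h) =O[𝓝[>] (0:ℝ)] fun h => h^2 :=
    ((e1.trans (pow_bigO_pow (by norm_num))).add
      (poly_tail c2 c3 c4)).congr_left fun h => by ring
  have hr2 : (fun h : ℝ => (f (x + 2*h) - f (x + h)) - c1*h) =O[𝓝[>] (0:ℝ)] fun h => h^2 :=
    (((e2.sub e1).trans (pow_bigO_pow (by norm_num))).add
      (poly_tail (3*c2) (7*c3) (15*c4))).congr_left fun h => by ring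
  -- products for beta expansions
  have hprod : ∀ ρ : ℝ → ℝ, (ρ =O[𝓝[>] (0:ℝ)] fun h => h^2) →
      (fun h => ρ h * (ρ h + 2*c1*h)) =O[𝓝[>] (0:ℝ)] fun h => h^3 := by
    intro ρ hρ
    exact mul_bigO_pow hρ
      ((hρ.trans (pow_bigO_pow (by norm_num))).add (lin_bigO (2*c1)))
  -- beta asymptotics
  have hb0 : (fun h : ℝ => betaLOC f x h 0 - c1^2*h^2) =O[𝓝[>] (0:ℝ)] fun h => h^3 :=
    ((((hprod _ hr2m).const_mul_left (1/2)).add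
      ((hprod _ hr1m).const_mul_left (1/2))).add
      ((mul_bigO_pow hA2 hA2).trans (pow_bigO_pow (by norm_num)))).congr_left
      fun h => by simp only [betaLOC, Matrix.cons_val_zero]; ring
  have hb1 : (fun h : ℝ => betaLOC f x h 1 - c1^2*h^2) =O[𝓝[>] (0:ℝ)] fun h => h^3 :=
    ((((hprod _ hr1m).const_mul_left (1/2)).add
      ((hprod _ hr1).const_mul_left (1/2))).add
      ((mul_bigO_pow hB2 hB2).trans (pow_bigO_pow (by norm_num)))).congr_left
      fun h => by simp only [betaLOC, Matrix.cons_val_one, Matrix.head_cons, Matrix.cons_val_zero]; ring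
  have hb2 : (fun h : ℝ => betaLOC f x h 2 - c1^2*h^2) =O[𝓝[>] (0:ℝ)] fun h => h^3 :=
    ((((hprod _ hr1).const_mul_left (1/2)).add
      ((hprod _ hr2).const_mul_left (1/2))).add
      ((mul_bigO_pow hC2 hC2).trans (pow_bigO_pow (by norm_num)))).congr_left
      fun h => by
        simp only [betaLOC, Matrix.cons_val_two, Matrix.tail_cons, Matrix.head_cons]; ring
  -- zeta asymptotics
  have hcross : ∀ e P : ℝ → ℝ, (e =O[𝓝[>] (0:ℝ)] fun h => h^5) →
      (P =O[𝓝[>] (0:ℝ)] fun h => h^2) →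
      (fun h => e h * (2*P h + e h)) =O[𝓝[>] (0:ℝ)] fun h => h^6 := by
    intro e P he hP
    exact (mul_bigO_pow he ((hP.const_mul_left 2).add
      (he.trans (pow_bigO_pow (by norm_num))))).trans (pow_bigO_pow (by norm_num))
  have hzS : (fun h : ℝ => (f (x - 2*h) - 2*f (x - h) + f x)^2
      - 2*(f (x - h) - 2*f x + f (x + h))^2
      + (f x - 2*f (x + h) + f (x + 2*h))^2) =O[𝓝[>] (0:ℝ)] fun h => h^6 := by
    have base := ((const_mul_pow_bigO (n := 6) (96*c2*c4 + 72*c3^2)).add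
      ((const_mul_pow_bigO (n := 8) (384*c4^2)).trans (pow_bigO_pow (by norm_num)))).add
      (((hcross _ _ hA (poly_tail (2*c2) (-6*c3) (14*c4))).sub
        ((hcross _ _ hB (poly_tail (2*c2) 0 (2*c4))).const_mul_left 2)).add
        (hcross _ _ hC (poly_tail (2*c2) (6*c3) (14*c4))))
    exact base.congr_left fun h => by ring
  -- extract constants
  obtain ⟨Cz, hCz⟩ := isBigO_iff.mp hzS
  obtain ⟨C0, hC0⟩ := isBigO_iff.mp hb0
  obtain ⟨C1, hC1⟩ := isBigO_iff.mp hb1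
  obtain ⟨C2, hC2⟩ := isBigO_iff.mp hb2
  have hc1ne : c1 ≠ 0 := hc1 ▸ hx
  set q : ℝ := c1^2/2 with hqdef
  have hq : 0 < q := by
    have : 0 < c1^2 := lt_of_le_of_ne (sq_nonneg c1) (Ne.symm (pow_ne_zero 2 hc1ne))
    simp only [hqdef]; linarith
  set D : ℝ := |C0| + |C1| + |C2| + 1 with hDdef
  have hD : 0 < D := by positivity
  set CF : ℝ := |Cz| * D / q^2 with hCFdef
  have hsmall : ∀ᶠ h : ℝ in 𝓝[>] (0:ℝ), h ∈ Set.Ioo (0:ℝ) (q/D) :=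
    Ioo_mem_nhdsGT_of_mem (Set.left_mem_Ico.mpr (by positivity))
  -- master eventual statement
  have master : ∀ᶠ h : ℝ in 𝓝[>] (0:ℝ), 0 < h ∧
      (0 ≤ zetaUD f x h / betaLOC f x h 0 ∧ 0 ≤ zetaUD f x h / betaLOC f x h 1 ∧
        0 ≤ zetaUD f x h / betaLOC f x h 2) ∧
      (|zetaUD f x h / betaLOC f x h 0 - zetaUD f x h / betaLOC f x h 1| ≤ CF * h^5 ∧
       |zetaUD f x h / betaLOC f x h 0 - zetaUD f x h / betaLOC f x h 2| ≤ CF * h^5 ∧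
       |zetaUD f x h / betaLOC f x h 1 - zetaUD f x h / betaLOC f x h 2| ≤ CF * h^5) := by
    filter_upwards [hsmall, hCz, hC0, hC1, hC2] with h hh hz' h0' h1' h2'
    have hhp : 0 < h := hh.1
    have hne : h ≠ 0 := ne_of_gt hhp
    have habs3 : ‖h^3‖ = h^3 := abs_of_pos (pow_pos hhp 3)
    have habs6 : ‖h^6‖ = h^6 := abs_of_pos (pow_pos hhp 6)
    rw [Real.norm_eq_abs, habs3] at h0' h1' h2'
    rw [Real.norm_eq_abs, habs6] at hz'
    have hznn : 0 ≤ zetaUD f x h := abs_nonneg _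
    have hz6 : zetaUD f x h ≤ |Cz| * h^6 := by
      have : zetaUD f x h = |(f (x - 2*h) - 2*f (x - h) + f x)^2
          - 2*(f (x - h) - 2*f x + f (x + h))^2
          + (f x - 2*f (x + h) + f (x + 2*h))^2| := rfl
      rw [this]
      refine le_trans hz' ?_
      have : (0:ℝ) ≤ h^6 := le_of_lt (pow_pos hhp 6)
      nlinarith [le_abs_self Cz]
    have hd0 : |betaLOC f x h 0 - c1^2*h^2| ≤ |C0| * h^3 := by
      refine le_trans h0' ?_
      have : (0:ℝ) ≤ h^3 := le_of_lt (pow_pos hhp 3)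
      nlinarith [le_abs_self C0]
    have hd1 : |betaLOC f x h 1 - c1^2*h^2| ≤ |C1| * h^3 := by
      refine le_trans h1' ?_
      have : (0:ℝ) ≤ h^3 := le_of_lt (pow_pos hhp 3)
      nlinarith [le_abs_self C1]
    have hd2 : |betaLOC f x h 2 - c1^2*h^2| ≤ |C2| * h^3 := by
      refine le_trans h2' ?_
      have : (0:ℝ) ≤ h^3 := le_of_lt (pow_pos hhp 3)
      nlinarith [le_abs_self C2]
    -- lower bounds on betas
    have hlow : ∀ β Ci : ℝ, |β - c1^2*h^2| ≤ Ci * h^3 → 0 ≤ Ci → Ci ≤ D →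
        q * h^2 ≤ β := by
      intro β Ci hβi hCi hCiD
      have h1 : β - c1^2*h^2 ≥ -(Ci * h^3) := neg_le_of_abs_le hβi
      have h2 : Ci * h < q := by
        calc Ci * h ≤ D * h := by nlinarith
          _ < D * (q/D) := by exact (mul_lt_mul_iff_right₀ hD).mpr hh.2
          _ = q := by field_simp
      nlinarith [sq_nonneg h, pow_pos hhp 2]
    have hl0 : q * h^2 ≤ betaLOC f x h 0 := hlow _ _ hd0 (abs_nonneg _)
      (by simp only [hDdef]; have := abs_nonneg C1; have := abs_nonneg C2; linarith)
    have hl1 : q * h^2 ≤ betaLOC f x h 1 := hlow _ _ hd1 (abs_nonneg _)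
      (by simp only [hDdef]; have := abs_nonneg C0; have := abs_nonneg C2; linarith)
    have hl2 : q * h^2 ≤ betaLOC f x h 2 := hlow _ _ hd2 (abs_nonneg _)
      (by simp only [hDdef]; have := abs_nonneg C0; have := abs_nonneg C1; linarith)
    have hp0 : 0 < betaLOC f x h 0 := lt_of_lt_of_le (by positivity) hl0
    have hp1 : 0 < betaLOC f x h 1 := lt_of_lt_of_le (by positivity) hl1
    have hp2 : 0 < betaLOC f x h 2 := lt_of_lt_of_le (by positivity) hl2
    -- pairwise bound
    have key : ∀ βi βj Ci Cj : ℝ, 0 < βi → 0 < βj → q*h^2 ≤ βi → q*h^2 ≤ βj →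
        |βi - c1^2*h^2| ≤ Ci * h^3 → |βj - c1^2*h^2| ≤ Cj * h^3 →
        0 ≤ Ci → 0 ≤ Cj → Ci + Cj ≤ D →
        |zetaUD f x h / βi - zetaUD f x h / βj| ≤ CF * h^5 := by
      intro βi βj Ci Cj hpi hpj hqi hqj hi hj hCi hCj hij
      have he : zetaUD f x h / βi - zetaUD f x h / βj
          = zetaUD f x h * (βj - βi) / (βi * βj) := by
        field_simp
      rw [he, abs_div, abs_mul, abs_of_nonneg hznn, abs_of_pos (mul_pos hpi hpj)]
      have hn : |βj - βi| ≤ D * h^3 := by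
        have t1 := abs_sub_le βj (c1^2*h^2) βi
        have t2 : |c1^2*h^2 - βi| = |βi - c1^2*h^2| := abs_sub_comm _ _
        have h3nn : (0:ℝ) ≤ h^3 := le_of_lt (pow_pos hhp 3)
        nlinarith [t1, hi, hj]
      have top : zetaUD f x h * |βj - βi| ≤ (|Cz| * h^6) * (D * h^3) :=
        mul_le_mul hz6 hn (abs_nonneg _) (by positivity)
      have bot : (q*h^2) * (q*h^2) ≤ βi * βj :=
        mul_le_mul hqi hqj (by positivity) (le_of_lt hpi)
      calc zetaUD f x h * |βj - βi| / (βi * βj)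
          ≤ ((|Cz| * h^6) * (D * h^3)) / ((q*h^2) * (q*h^2)) := by
            apply div_le_div₀ (by positivity) top (by positivity) bot
        _ = CF * h^5 := by
            simp only [hCFdef]
            field_simp
    refine ⟨hhp, ⟨div_nonneg hznn (le_of_lt hp0), div_nonneg hznn (le_of_lt hp1),
      div_nonneg hznn (le_of_lt hp2)⟩, ?_, ?_, ?_⟩
    · exact key _ _ _ _ hp0 hp1 hl0 hl1 hd0 hd1 (abs_nonneg _) (abs_nonneg _)
        (by simp only [hDdef]; have := abs_nonneg C2; linarith)
    · exact key _ _ _ _ hp0 hp2 hl0 hl2 hd0 hd2 (abs_nonneg _) (abs_nonneg _)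
        (by simp only [hDdef]; have := abs_nonneg C1; linarith)
    · exact key _ _ _ _ hp1 hp2 hl1 hl2 hd1 hd2 (abs_nonneg _) (abs_nonneg _)
        (by simp only [hDdef]; have := abs_nonneg C0; linarith)
  -- conclude
  intro k
  fin_cases k
  · rw [isBigO_iff]
    refine ⟨CF, ?_⟩
    filter_upwards [master] with h hm
    obtain ⟨hhp, ⟨hr0, hr1', hr2'⟩, h01, h02, h12⟩ := hm
    simp only [dlin, Fin.sum_univ_three, Matrix.cons_val_zero, Matrix.cons_val_one,
      Matrix.head_cons, Matrix.cons_val_two, Matrix.tail_cons]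
    rw [Real.norm_eq_abs, Real.norm_eq_abs, abs_of_pos (pow_pos hhp 5)]
    exact (final_ineq _ _ _ _ hr0 hr1' hr2' h01 h02 h12).1
  · rw [isBigO_iff]
    refine ⟨CF, ?_⟩
    filter_upwards [master] with h hm
    obtain ⟨hhp, ⟨hr0, hr1', hr2'⟩, h01, h02, h12⟩ := hm
    simp only [dlin, Fin.sum_univ_three, Matrix.cons_val_zero, Matrix.cons_val_one,
      Matrix.head_cons, Matrix.cons_val_two, Matrix.tail_cons]
    rw [Real.norm_eq_abs, Real.norm_eq_abs, abs_of_pos (pow_pos hhp 5)]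
    exact (final_ineq _ _ _ _ hr0 hr1' hr2' h01 h02 h12).2.1
  · rw [isBigO_iff]
    refine ⟨CF, ?_⟩
    filter_upwards [master] with h hm
    obtain ⟨hhp, ⟨hr0, hr1', hr2'⟩, h01, h02, h12⟩ := hm
    simp only [dlin, Fin.sum_univ_three, Matrix.cons_val_zero, Matrix.cons_val_one,
      Matrix.head_cons, Matrix.cons_val_two, Matrix.tail_cons]
    rw [Real.norm_eq_abs, Real.norm_eq_abs, abs_of_pos (pow_pos hhp 5)]
    exact (final_ineq _ _ _ _ hr0 hr1' hr2' h01 h02 h12).2.2
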